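/- arXiv:2104.14091 — 3 statements merged into one kernel-verified Lean document; each statement's English description precedes it below -/
import Mathlib

section
/- Suppose P is a joint distribution of (X, Y1, Y2) with Y1 and Y2 conditionally independent given X, and let gamma(x) = P(Y1=1 or Y2=1 | X=x) > 0. Define Q as P conditioned on the event {Y1=1 or Y2=1}, and let q1(x) = Q(Y1=1 | X=x), q2(x) = Q(Y2=1 | X=x), q12(x) = Q(Y1=1, Y2=1 | X=x). Then for all x with q12(x) > 0, gamma(x) = q12(x) / (q1(x) * q2(x)). -/
theorem mul_div_div_div_mul_div_eq_self {K : Type*} [Field K] {a b g : K}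
    (ha : a ≠ 0) (hb : b ≠ 0) : a * b / g / (a / g * (b / g)) = g := by
  rcases eq_or_ne g 0 with rfl | hg
  · simp
  · field_simp

theorem conditional_capture_identification_general {X : Type*}
    (p1 p2 p12 gamma q1 q2 q12 : X → ℝ)
    -- conditional independence of the two lists given X, under P
    (hindep : ∀ x, p12 x = p1 x * p2 x)
    -- Q is P conditioned on capture: conditional probabilities rescale by gamma
    (hq1 : ∀ x, q1 x = p1 x / gamma x)
    (hq2 : ∀ x, q2 x = p2 x / gamma x)
    (hq12 : ∀ x, q12 x = p12 x / gamma x) :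
    ∀ x, 0 < q12 x → gamma x = q12 x / (q1 x * q2 x) := by
  intro x hq
  have hp12 : p1 x * p2 x ≠ 0 := by
    rintro h
    rw [hq12 x, hindep x, h, zero_div] at hq
    exact hq.false
  obtain ⟨hp1, hp2⟩ := mul_ne_zero_iff.mp hp12
  rw [hq1 x, hq2 x, hq12 x, hindep x, mul_div_div_div_mul_div_eq_self hp1 hp2]

/-- Identification of the conditional capture probability: if `Y1 ⊥ Y2 | X`
under `P` (i.e. `p12 = p1 * p2` for the conditional probabilities under `P`),
`gamma(x) = P(Y1=1 or Y2=1 | X=x) > 0`, and the observed `q`-probabilities are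
the `P`-conditional probabilities rescaled by `gamma(x)` (conditioning on
capture), then wherever `q12(x) > 0` we have
`gamma(x) = q12(x) / (q1(x) * q2(x))`. -/
theorem conditional_capture_identification {X : Type*}
    (p1 p2 p12 gamma q1 q2 q12 : X → ℝ)
    -- conditional independence of the two lists given X, under P
    (hindep : ∀ x, p12 x = p1 x * p2 x)
    -- gamma(x) = P(Y1 = 1 or Y2 = 1 | X = x), by inclusion-exclusion
    (hgamma : ∀ x, gamma x = p1 x + p2 x - p12 x)
    (hgamma_pos : ∀ x, 0 < gamma x)
    -- Q is P conditioned on capture: conditional probabilities rescale by gamma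
    (hq1 : ∀ x, q1 x = p1 x / gamma x)
    (hq2 : ∀ x, q2 x = p2 x / gamma x)
    (hq12 : ∀ x, q12 x = p12 x / gamma x) :
    ∀ x, 0 < q12 x → gamma x = q12 x / (q1 x * q2 x) :=
  conditional_capture_identification_general p1 p2 p12 gamma q1 q2 q12 hindep hq1 hq2 hq12
end

section
/- With phi as the efficient influence function defined by phi(Z) = (1/gamma(X)) * ( Y1/q1(X) + Y2/q2(X) - Y1 Y2/q12(X) ) - 1/psi, the conditional variance given X satisfies Var_Q(phi | X) = (1/gamma(X)^2) * ( 2*gamma(X) - 1/q1(X) - 1/q2(X) + 1/q12(X) - 1 ), where gamma(x) = q12(x)/(q1(x)q2(x)). Consequently, Var_Q(phi) = Var_Q(1/gamma(X)) + E_Q[ (1/gamma(X)^2) ( 2 gamma(X) - 1/q1(X) - 1/q2(X) + 1/q12(X) - 1 ) ]. -/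
/-!
Given `X`, the influence function is `φ = Z / γ - 1/ψ` with `Z = Y1/q1 + Y2/q2 - Y1 Y2/q12`.
Because `Y1² = Y1`, `Y2² = Y2` and every other product of the indicators is `Y1 Y2`, the square
`Z²` is again a linear combination of `Y1`, `Y2`, `Y1 Y2`; taking conditional means gives
`E[Z | X] = 1` and `E[Z² | X] = 2γ - 1/q1 - 1/q2 + 1/q12`, hence `E[φ | X] = 1/γ - 1/ψ` and
`Var(φ | X) = Var(Z | X) / γ²`. The law of total variance, together with the invariance of
`Var(1/γ(X) - 1/ψ)` under the shift by `1/ψ`, gives the unconditional decomposition.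
-/

open MeasureTheory

/-- Expectation of `f(Y1, Y2)` under a conditional distribution
`p` of the pair of Bernoulli list indicators. -/
noncomputable def condMean (p : PMF (Bool × Bool)) (f : Bool × Bool → ℝ) : ℝ :=
  ∑ y : Bool × Bool, (p y).toReal * f y

lemma PMF.sum_toReal_eq_one {α : Type*} [Fintype α] (p : PMF α) : ∑ a, (p a).toReal = 1 := by
  rw [← ENNReal.toReal_sum (fun a _ => p.apply_ne_top a), ← tsum_fintype (L := .unconditional _),
    p.tsum_coe, ENNReal.toReal_one]

noncomputable def condVar (p : PMF (Bool × Bool)) (f : Bool × Bool → ℝ) : ℝ :=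
  condMean p (fun y => f y ^ 2) - condMean p f ^ 2

section condMean

variable (p : PMF (Bool × Bool))

lemma condMean_add (f g : Bool × Bool → ℝ) :
    condMean p (fun y => f y + g y) = condMean p f + condMean p g := by
  simp only [condMean, mul_add, Finset.sum_add_distrib]

lemma condMean_sub (f g : Bool × Bool → ℝ) :
    condMean p (fun y => f y - g y) = condMean p f - condMean p g := by
  simp only [condMean, mul_sub, Finset.sum_sub_distrib]

lemma condMean_const_mul (c : ℝ) (f : Bool × Bool → ℝ) :
    condMean p (fun y => c * f y) = c * condMean p f := by
  simp only [condMean, Finset.mul_sum, mul_left_comm]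

lemma condMean_mul_const (f : Bool × Bool → ℝ) (c : ℝ) :
    condMean p (fun y => f y * c) = condMean p f * c := by
  simp only [condMean, Finset.sum_mul, mul_assoc]

lemma condMean_div_const (f : Bool × Bool → ℝ) (c : ℝ) :
    condMean p (fun y => f y / c) = condMean p f / c := by
  simp only [div_eq_mul_inv, condMean_mul_const]

lemma condMean_const (c : ℝ) : condMean p (fun _ => c) = c := by
  rw [condMean, ← Finset.sum_mul, PMF.sum_toReal_eq_one, one_mul]

lemma condVar_affine (a c : ℝ) (f : Bool × Bool → ℝ) :
    condVar p (fun y => a * f y - c) = a ^ 2 * condVar p f := by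
  have hsq : (fun y => (a * f y - c) ^ 2) = fun y => a ^ 2 * f y ^ 2 - 2 * a * c * f y + c ^ 2 := by
    funext y; ring
  simp only [condVar, hsq, condMean_add, condMean_sub, condMean_const_mul, condMean_const]
  ring

end condMean

noncomputable def ipwScore (q1 q2 q12 : ℝ) (y : Bool × Bool) : ℝ :=
  (if y.1 then (1:ℝ) else 0) / q1 + (if y.2 then (1:ℝ) else 0) / q2
    - (if y.1 ∧ y.2 then (1:ℝ) else 0) / q12

lemma ipwScore_sq (q1 q2 q12 : ℝ) (y : Bool × Bool) :
    ipwScore q1 q2 q12 y ^ 2 = (if y.1 then (1:ℝ) else 0) / q1 ^ 2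
      + (if y.2 then (1:ℝ) else 0) / q2 ^ 2
      + (if y.1 ∧ y.2 then (1:ℝ) else 0)
        * (1 / q12 ^ 2 + 2 / (q1 * q2) - 2 / (q1 * q12) - 2 / (q2 * q12)) := by
  rcases y with ⟨_ | _, _ | _⟩ <;> simp [ipwScore]
  ring

section moments

variable {p : PMF (Bool × Bool)} {q1 q2 q12 : ℝ}
  (hq1 : q1 = condMean p (fun y => if y.1 then 1 else 0))
  (hq2 : q2 = condMean p (fun y => if y.2 then 1 else 0))
  (hq12 : q12 = condMean p (fun y => if y.1 ∧ y.2 then 1 else 0))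
include hq1 hq2 hq12

lemma condMean_ipwScore (h1 : q1 ≠ 0) (h2 : q2 ≠ 0) (h12 : q12 ≠ 0) :
    condMean p (ipwScore q1 q2 q12) = 1 := by
  unfold ipwScore
  simp only [condMean_sub, condMean_add, condMean_div_const, ← hq1, ← hq2, ← hq12,
    div_self h1, div_self h2, div_self h12]
  norm_num

lemma condVar_ipwScore (h1 : q1 ≠ 0) (h2 : q2 ≠ 0) (h12 : q12 ≠ 0) :
    condVar p (ipwScore q1 q2 q12) = 2 * (q12 / (q1 * q2)) - 1 / q1 - 1 / q2 + 1 / q12 - 1 := by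
  rw [condVar, condMean_ipwScore hq1 hq2 hq12 h1 h2 h12, funext (ipwScore_sq q1 q2 q12)]
  simp only [condMean_add, condMean_div_const, condMean_mul_const, ← hq1, ← hq2, ← hq12]
  field_simp
  ring

end moments

section totalVariance

variable {X : Type*} [MeasurableSpace X] (ν : Measure X)

lemma integral_condMean_sq_sub_sq (κ : X → PMF (Bool × Bool)) (f : X → Bool × Bool → ℝ)
    (hmean : Integrable (fun x => condMean (κ x) (f x) ^ 2) ν)
    (hvar : Integrable (fun x => condVar (κ x) (f x)) ν) :
    (∫ x, condMean (κ x) (fun y => f x y ^ 2) ∂ν) - (∫ x, condMean (κ x) (f x) ∂ν) ^ 2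
      = ((∫ x, condMean (κ x) (f x) ^ 2 ∂ν) - (∫ x, condMean (κ x) (f x) ∂ν) ^ 2)
        + ∫ x, condVar (κ x) (f x) ∂ν := by
  have hsplit : (fun x => condMean (κ x) (fun y => f x y ^ 2))
      = fun x => condMean (κ x) (f x) ^ 2 + condVar (κ x) (f x) := by
    funext x; rw [condVar]; ring
  rw [hsplit, integral_add hmean hvar]
  ring

lemma integral_sub_const_sq_sub_sq_integral [IsProbabilityMeasure ν] {g : X → ℝ}
    (hg : MemLp g 2 ν) (c : ℝ) :
    (∫ x, (g x - c) ^ 2 ∂ν) - (∫ x, g x - c ∂ν) ^ 2 = (∫ x, g x ^ 2 ∂ν) - (∫ x, g x ∂ν) ^ 2 := by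
  have h := ProbabilityTheory.variance_sub_const hg.aestronglyMeasurable c (μ := ν)
  rw [ProbabilityTheory.variance_eq_sub (X := fun x => g x - c) (hg.sub (memLp_const c)),
    ProbabilityTheory.variance_eq_sub hg] at h
  simpa only [Pi.pow_apply] using h

end totalVariance

theorem eif_conditional_and_total_variance_general {X : Type*} [MeasurableSpace X]
    (ν : Measure X) [IsProbabilityMeasure ν]
    (κ : X → PMF (Bool × Bool))
    (q1 q2 q12 gamma : X → ℝ)
    (hq1 : ∀ x, q1 x = condMean (κ x) (fun y => if y.1 then 1 else 0))
    (hq2 : ∀ x, q2 x = condMean (κ x) (fun y => if y.2 then 1 else 0))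
    (hq12 : ∀ x, q12 x = condMean (κ x) (fun y => if y.1 ∧ y.2 then 1 else 0))
    (hpos : ∀ x, 0 < q1 x ∧ 0 < q2 x ∧ 0 < q12 x)
    (hgamma : ∀ x, gamma x = q12 x / (q1 x * q2 x))
    (ψinv : ℝ)
    (φ : X → Bool × Bool → ℝ)
    (hφ : ∀ x y, φ x y = (1 / gamma x) * ((if y.1 then (1:ℝ) else 0) / q1 x
        + (if y.2 then (1:ℝ) else 0) / q2 x
        - (if y.1 ∧ y.2 then (1:ℝ) else 0) / q12 x) - ψinv)
    -- integrability over the covariate distribution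
    (hint1 : Integrable (fun x => 1 / gamma x) ν)
    (hint2 : Integrable (fun x => (1 / gamma x) ^ 2) ν)
    (hintv : Integrable (fun x => (1 / gamma x ^ 2) *
        (2 * gamma x - 1 / q1 x - 1 / q2 x + 1 / q12 x - 1)) ν) :
    -- conditional variance of φ given X = x
    (∀ x, condMean (κ x) (fun y => (φ x y) ^ 2) - (condMean (κ x) (φ x)) ^ 2
        = (1 / gamma x ^ 2) * (2 * gamma x - 1 / q1 x - 1 / q2 x + 1 / q12 x - 1))
    -- total variance decomposition
    ∧ (∫ x, condMean (κ x) (fun y => (φ x y) ^ 2) ∂ν)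
        - (∫ x, condMean (κ x) (φ x) ∂ν) ^ 2
      = ((∫ x, (1 / gamma x) ^ 2 ∂ν) - (∫ x, 1 / gamma x ∂ν) ^ 2)
        + ∫ x, (1 / gamma x ^ 2) *
            (2 * gamma x - 1 / q1 x - 1 / q2 x + 1 / q12 x - 1) ∂ν := by
  have hφ_affine x : φ x = fun y => 1 / gamma x * ipwScore (q1 x) (q2 x) (q12 x) y - ψinv :=
    funext (hφ x)
  have hmean x : condMean (κ x) (φ x) = 1 / gamma x - ψinv := by
    obtain ⟨h1, h2, h12⟩ := hpos x
    rw [hφ_affine, condMean_sub, condMean_const_mul, condMean_const,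
      condMean_ipwScore (hq1 x) (hq2 x) (hq12 x) h1.ne' h2.ne' h12.ne', mul_one]
  have hvar x : condVar (κ x) (φ x)
      = 1 / gamma x ^ 2 * (2 * gamma x - 1 / q1 x - 1 / q2 x + 1 / q12 x - 1) := by
    obtain ⟨h1, h2, h12⟩ := hpos x
    rw [hφ_affine, condVar_affine,
      condVar_ipwScore (hq1 x) (hq2 x) (hq12 x) h1.ne' h2.ne' h12.ne', ← hgamma, one_div_pow]
  refine ⟨hvar, ?_⟩
  have hL2 : MemLp (fun x => 1 / gamma x) 2 ν :=
    (memLp_two_iff_integrable_sq hint1.aestronglyMeasurable).2 hint2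
  rw [integral_condMean_sq_sub_sq ν κ φ
      (by simpa only [hmean, Pi.sub_apply] using (hL2.sub (memLp_const ψinv)).integrable_sq)
      (by simpa only [hvar] using hintv)]
  simp only [hmean, hvar]
  rw [integral_sub_const_sq_sub_sq_integral ν hL2]

/-- Conditional and total variance of the efficient influence function.  With
`(Y1, Y2)` Bernoulli given `X = x` with moments `q1(x), q2(x), q12(x)`,
`γ = q12/(q1 q2)` and `1/ψ = E_Q[1/γ(X)]`, the conditional variance of
`φ` given `X` equals `(1/γ²)(2γ - 1/q1 - 1/q2 + 1/q12 - 1)`, and by the law of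
total variance `Var_Q(φ) = Var_Q(1/γ(X)) + E_Q[(1/γ²)(2γ - 1/q1 - 1/q2 + 1/q12 - 1)]`. -/
theorem eif_conditional_and_total_variance {X : Type*} [MeasurableSpace X]
    (ν : Measure X) [IsProbabilityMeasure ν]
    (κ : X → PMF (Bool × Bool))
    (q1 q2 q12 gamma : X → ℝ)
    (hq1 : ∀ x, q1 x = condMean (κ x) (fun y => if y.1 then 1 else 0))
    (hq2 : ∀ x, q2 x = condMean (κ x) (fun y => if y.2 then 1 else 0))
    (hq12 : ∀ x, q12 x = condMean (κ x) (fun y => if y.1 ∧ y.2 then 1 else 0))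
    (hpos : ∀ x, 0 < q1 x ∧ 0 < q2 x ∧ 0 < q12 x)
    (hgamma : ∀ x, gamma x = q12 x / (q1 x * q2 x))
    (ψinv : ℝ) (hψinv : ψinv = ∫ x, 1 / gamma x ∂ν)
    (φ : X → Bool × Bool → ℝ)
    (hφ : ∀ x y, φ x y = (1 / gamma x) * ((if y.1 then (1:ℝ) else 0) / q1 x
        + (if y.2 then (1:ℝ) else 0) / q2 x
        - (if y.1 ∧ y.2 then (1:ℝ) else 0) / q12 x) - ψinv)
    -- integrability over the covariate distribution
    (hint1 : Integrable (fun x => 1 / gamma x) ν)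
    (hint2 : Integrable (fun x => (1 / gamma x) ^ 2) ν)
    (hintm : Integrable (fun x => condMean (κ x) (φ x)) ν)
    (hintm2 : Integrable (fun x => condMean (κ x) (fun y => (φ x y) ^ 2)) ν)
    (hintv : Integrable (fun x => (1 / gamma x ^ 2) *
        (2 * gamma x - 1 / q1 x - 1 / q2 x + 1 / q12 x - 1)) ν) :
    -- conditional variance of φ given X = x
    (∀ x, condMean (κ x) (fun y => (φ x y) ^ 2) - (condMean (κ x) (φ x)) ^ 2
        = (1 / gamma x ^ 2) * (2 * gamma x - 1 / q1 x - 1 / q2 x + 1 / q12 x - 1))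
    -- total variance decomposition
    ∧ (∫ x, condMean (κ x) (fun y => (φ x y) ^ 2) ∂ν)
        - (∫ x, condMean (κ x) (φ x) ∂ν) ^ 2
      = ((∫ x, (1 / gamma x) ^ 2 ∂ν) - (∫ x, 1 / gamma x ∂ν) ^ 2)
        + ∫ x, (1 / gamma x ^ 2) *
            (2 * gamma x - 1 / q1 x - 1 / q2 x + 1 / q12 x - 1) ∂ν :=
  eif_conditional_and_total_variance_general ν κ q1 q2 q12 gamma hq1 hq2 hq12 hpos hgamma ψinv φ hφ
    hint1 hint2 hintv
end

section
/- Let qbar1, qbar2, qbar12 be positive functions with gammabar = qbar12/(qbar1 qbar2), and let q1, q2, q12, gamma = q12/(q1 q2) be the true functions. Then pointwise for each x: (1/gammabar)( q1/qbar1 + q2/qbar2 - q12/qbar12 ) - 1/gamma = (1/qbar12) [ (q1 - qbar1)(qbar2 - q2) + (q12 - qbar12)(1/gamma - 1/gammabar) ]. -/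
/-! With `1 / γ = q₁ q₂ / q₁₂`, both sides multiplied by `q̄₁₂` expand to
`q₁ q̄₂ + q̄₁ q₂ - q̄₁ q̄₂ q₁₂ / q̄₁₂ - q₁ q₂ q̄₁₂ / q₁₂`. -/

theorem mul_div_mul_sub_div_eq_remainder {K : Type*} [Field K] {a b c a' b' c' : K}
    (hc : c ≠ 0) (ha' : a' ≠ 0) (hb' : b' ≠ 0) (hc' : c' ≠ 0) :
    a' * b' / c' * (a / a' + b / b' - c / c') - a * b / c
      = 1 / c' * ((a - a') * (b' - b) + (c - c') * (a * b / c - a' * b' / c')) := by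
  field_simp
  ring

theorem second_order_remainder_identity_general {X : Type*}
    (q1 q2 q12 qb1 qb2 qb12 : X → ℝ)
    (h12 : ∀ x, 0 < q12 x)
    (hb1 : ∀ x, 0 < qb1 x) (hb2 : ∀ x, 0 < qb2 x) (hb12 : ∀ x, 0 < qb12 x)
    (gamma gammab : X → ℝ)
    (hg : ∀ x, gamma x = q12 x / (q1 x * q2 x))
    (hgb : ∀ x, gammab x = qb12 x / (qb1 x * qb2 x)) :
    ∀ x, (1 / gammab x) * (q1 x / qb1 x + q2 x / qb2 x - q12 x / qb12 x)
        - 1 / gamma x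
      = (1 / qb12 x) * ((q1 x - qb1 x) * (qb2 x - q2 x)
          + (q12 x - qb12 x) * (1 / gamma x - 1 / gammab x)) := by
  intro x
  rw [hg, hgb, one_div_div, one_div_div]
  exact mul_div_mul_sub_div_eq_remainder (h12 x).ne' (hb1 x).ne' (hb2 x).ne' (hb12 x).ne'

/-- The key second-order remainder identity underlying the doubly robust
estimator, pointwise in the covariate `x`. -/
theorem second_order_remainder_identity {X : Type*}
    (q1 q2 q12 qb1 qb2 qb12 : X → ℝ)
    (h1 : ∀ x, 0 < q1 x) (h2 : ∀ x, 0 < q2 x) (h12 : ∀ x, 0 < q12 x)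
    (hb1 : ∀ x, 0 < qb1 x) (hb2 : ∀ x, 0 < qb2 x) (hb12 : ∀ x, 0 < qb12 x)
    (gamma gammab : X → ℝ)
    (hg : ∀ x, gamma x = q12 x / (q1 x * q2 x))
    (hgb : ∀ x, gammab x = qb12 x / (qb1 x * qb2 x)) :
    ∀ x, (1 / gammab x) * (q1 x / qb1 x + q2 x / qb2 x - q12 x / qb12 x)
        - 1 / gamma x
      = (1 / qb12 x) * ((q1 x - qb1 x) * (qb2 x - q2 x)
          + (q12 x - qb12 x) * (1 / gamma x - 1 / gammab x)) :=
  second_order_remainder_identity_general q1 q2 q12 qb1 qb2 qb12 h12 hb1 hb2 hb12 gamma gammab hg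
    hgb
end
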